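/- For every θ ∈ [π/2,π), the self-adjoint operators T̂_0 − T̂_θ^+ and T̂_0 + T̂_θ^− on L²(ℝ) are bounded above by 2^{−1/2}·Id in the sense of quadratic forms (⟨(T̂_0 − T̂_θ^+)φ,φ⟩ ≤ 2^{−1/2}‖φ‖² and ⟨(T̂_0 + T̂_θ^−)φ,φ⟩ ≤ 2^{−1/2}‖φ‖² for all φ); in particular, neither operator has an eigenvalue k > 1/√2. -/

import Mathlib

open MeasureTheory Real
open scoped RealInnerProductSpace

noncomputable section

/-- `L²(ℝ)` with real scalars. -/
abbrev Hsp : Type := Lp ℝ 2 (volume : Measure ℝ)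

/-- The kernel of the integral operator `T̂_θ` on `L²(ℝ)`. -/
def Tker (θ p q : ℝ) : ℝ :=
  (1 / (2 * Real.pi * Real.sin θ)) *
    ((p ^ 2 - 2 * Real.cos θ * p * q + q ^ 2) / (2 * Real.sin θ ^ 2) + 1)⁻¹

/-- The kernel of the even part `T̂_θ⁺`:  `(T̂_θ(p,q) + T̂_θ(−p,q))/2`. -/
def TkerPlus (θ p q : ℝ) : ℝ := (Tker θ p q + Tker θ (-p) q) / 2

/-- The kernel of the odd part `T̂_θ⁻`:  `(T̂_θ(p,q) − T̂_θ(−p,q))/2`. -/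
def TkerMinus (θ p q : ℝ) : ℝ := (Tker θ p q - Tker θ (-p) q) / 2

/-!
`T̂₀` is multiplication by `(p² + 2)^{-1/2} ≤ 2^{-1/2}`, so it suffices that `T̂_θ⁺ ≥ 0` and
`T̂_θ⁻ ≤ 0`. With `γ = -cos θ ∈ [0, 1)` and `s = sin θ`, `T̂_θ^±` has kernel
`±(s/2π)(1/D₋ ± 1/D₊)`, where `D∓ = p² + q² ∓ 2γpq + 2s²`. Writing `1/D = ∫₀^∞ e^{-tD} dt`,
splitting `e^{-tD∓} = e^{-t((1-γ)p² + s²)} e^{-t((1-γ)q² + s²)} e^{-γt(p ∓ q)²}` and expressing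
the last Gaussian as the convolution `(2/√π) ∫ e^{-2(y - √(γt)p)²} e^{-2(y ∓ √(γt)q)²} dy`
exhibits both kernels as Gram kernels `∫ G(ω,p) G(ω,q) dν(ω)` over `ω = (t, y)`. The quadratic
form of a Gram kernel is `∫ (∫ G(ω,p) φ(p) dp)² dν(ω) ≥ 0`; Fubini applies because the kernel
is dominated by `h(p) h(q)` with `h(p) ∝ ((1-γ)p² + s²)^{-1/2} ∈ L²`.
-/

open Set Filter Function

section GramKernel

variable {α Ω : Type*} [MeasurableSpace α] [MeasurableSpace Ω] {μ : Measure α} {ν : Measure Ω}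
  [SigmaFinite ν] {G : Ω → α → ℝ} {φ : α → ℝ}

theorem integral_gram_form_nonneg [SigmaFinite μ]
    (h : Integrable (fun x : (α × α) × Ω => G x.2 x.1.1 * φ x.1.1 * (G x.2 x.1.2 * φ x.1.2))
      ((μ.prod μ).prod ν)) :
    0 ≤ ∫ p, (∫ q, (∫ ω, G ω p * G ω q ∂ν) * φ q ∂μ) * φ p ∂μ := by
  have hform : ∫ p, (∫ q, (∫ ω, G ω p * G ω q ∂ν) * φ q ∂μ) * φ p ∂μ
      = ∫ ω, (∫ p, G ω p * φ p ∂μ) ^ 2 ∂ν := by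
    calc _ = ∫ p, ∫ q, ∫ ω, G ω p * φ p * (G ω q * φ q) ∂ν ∂μ ∂μ := by
          congr 1 with p
          rw [← integral_mul_const]
          congr 1 with q
          rw [← integral_mul_const, ← integral_mul_const]
          congr 1 with ω
          ring
      _ = ∫ z : α × α, ∫ ω, G ω z.1 * φ z.1 * (G ω z.2 * φ z.2) ∂ν ∂(μ.prod μ) :=
          integral_integral h.integral_prod_left
      _ = ∫ ω, ∫ z : α × α, G ω z.1 * φ z.1 * (G ω z.2 * φ z.2) ∂(μ.prod μ) ∂ν :=
          integral_integral_swap h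
      _ = ∫ ω, (∫ p, G ω p * φ p ∂μ) ^ 2 ∂ν := by
          congr 1 with ω
          exact (integral_prod_mul (fun p => G ω p * φ p) (fun q => G ω q * φ q)).trans (sq _).symm
  exact hform ▸ integral_nonneg fun ω => sq_nonneg _

theorem integrable_gram_of_le {h : α → ℝ} (hG : Measurable (uncurry G))
    (hφ : AEStronglyMeasurable φ μ) (hGG : ∀ p q, Integrable (fun ω => G ω p * G ω q) ν)
    (hle : ∀ p q, ∫ ω, |G ω p * G ω q| ∂ν ≤ h p * h q)
    (hhφ : Integrable (fun p => h p * φ p) μ) :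
    Integrable (fun x : (α × α) × Ω => G x.2 x.1.1 * φ x.1.1 * (G x.2 x.1.2 * φ x.1.2))
      ((μ.prod μ).prod ν) := by
  have hmeas : AEStronglyMeasurable
      (fun x : (α × α) × Ω => G x.2 x.1.1 * φ x.1.1 * (G x.2 x.1.2 * φ x.1.2))
      ((μ.prod μ).prod ν) := by
    have hG₁ : Measurable fun x : (α × α) × Ω => G x.2 x.1.1 :=
      hG.comp (measurable_snd.prodMk measurable_fst.fst)
    have hG₂ : Measurable fun x : (α × α) × Ω => G x.2 x.1.2 :=
      hG.comp (measurable_snd.prodMk measurable_fst.snd)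
    exact (hG₁.aestronglyMeasurable.mul hφ.comp_fst.comp_fst).mul
      (hG₂.aestronglyMeasurable.mul hφ.comp_snd.comp_fst)
  refine (integrable_prod_iff hmeas).2 ⟨ae_of_all _ fun z => ?_, ?_⟩
  · exact ((hGG z.1 z.2).mul_const (φ z.1 * φ z.2)).congr (ae_of_all _ fun ω => by ring)
  refine (hhφ.norm.mul_prod hhφ.norm).mono' hmeas.norm.integral_prod_right'
    (ae_of_all _ fun z => ?_)
  have hnorm : ∫ ω, ‖G ω z.1 * φ z.1 * (G ω z.2 * φ z.2)‖ ∂ν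
      = (∫ ω, |G ω z.1 * G ω z.2| ∂ν) * |φ z.1 * φ z.2| := by
    rw [← integral_mul_const]
    congr 1 with ω
    rw [Real.norm_eq_abs, ← abs_mul]
    ring_nf
  rw [Real.norm_of_nonneg (integral_nonneg fun _ => norm_nonneg _), hnorm]
  calc (∫ ω, |G ω z.1 * G ω z.2| ∂ν) * |φ z.1 * φ z.2|
      ≤ h z.1 * h z.2 * |φ z.1 * φ z.2| := by gcongr; exact hle _ _
    _ ≤ |h z.1 * h z.2| * |φ z.1 * φ z.2| := by gcongr; exact le_abs_self _
    _ = ‖h z.1 * φ z.1‖ * ‖h z.2 * φ z.2‖ := by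
        simp only [Real.norm_eq_abs, ← abs_mul]; ring_nf

end GramKernel

section GaussianConvolution

theorem gaussian_mul_gaussian_eq (a b y : ℝ) :
    exp (-2 * (y - a) ^ 2) * exp (-2 * (y - b) ^ 2)
      = exp (-(a - b) ^ 2) * exp (-4 * (y - (a + b) / 2) ^ 2) := by
  rw [← exp_add, ← exp_add]
  ring_nf

theorem integrable_gaussian_mul_gaussian (a b : ℝ) :
    Integrable fun y => exp (-2 * (y - a) ^ 2) * exp (-2 * (y - b) ^ 2) := by
  simp_rw [gaussian_mul_gaussian_eq a b]
  exact ((integrable_exp_neg_mul_sq (by norm_num : (0 : ℝ) < 4)).comp_sub_right _).const_mul _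

theorem integral_gaussian_mul_gaussian (a b : ℝ) :
    ∫ y, exp (-2 * (y - a) ^ 2) * exp (-2 * (y - b) ^ 2) = √π / 2 * exp (-(a - b) ^ 2) := by
  simp_rw [gaussian_mul_gaussian_eq a b]
  rw [integral_const_mul, integral_sub_right_eq_self (fun y => exp (-4 * y ^ 2)),
    integral_gaussian, Real.sqrt_div' _ (by norm_num : (0 : ℝ) ≤ 4),
    show (4 : ℝ) = 2 ^ 2 by norm_num, Real.sqrt_sq (by norm_num : (0 : ℝ) ≤ 2), mul_comm]

theorem gaussian_pair_mul_eq {ε : ℝ} (hε : |ε| = 1) (a b y : ℝ) :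
    (exp (-2 * (y - a) ^ 2) + ε * exp (-2 * (y - -a) ^ 2)) *
        (exp (-2 * (y - b) ^ 2) + ε * exp (-2 * (y - -b) ^ 2))
      = exp (-2 * (y - a) ^ 2) * exp (-2 * (y - b) ^ 2)
        + ε * (exp (-2 * (y - a) ^ 2) * exp (-2 * (y - -b) ^ 2))
        + ε * (exp (-2 * (y - -a) ^ 2) * exp (-2 * (y - b) ^ 2))
        + exp (-2 * (y - -a) ^ 2) * exp (-2 * (y - -b) ^ 2) := by
  have hε2 : ε * ε = 1 := by rw [← abs_mul_abs_self, hε, one_mul]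
  linear_combination (exp (-2 * (y - -a) ^ 2) * exp (-2 * (y - -b) ^ 2)) * hε2

theorem integrable_gaussian_pair_mul {ε : ℝ} (hε : |ε| = 1) (a b : ℝ) :
    Integrable fun y => (exp (-2 * (y - a) ^ 2) + ε * exp (-2 * (y - -a) ^ 2)) *
        (exp (-2 * (y - b) ^ 2) + ε * exp (-2 * (y - -b) ^ 2)) := by
  simp_rw [gaussian_pair_mul_eq hε]
  exact (((integrable_gaussian_mul_gaussian a b).add
    ((integrable_gaussian_mul_gaussian a (-b)).const_mul ε)).add
    ((integrable_gaussian_mul_gaussian (-a) b).const_mul ε)).add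
    (integrable_gaussian_mul_gaussian (-a) (-b))

theorem integral_gaussian_pair_mul {ε : ℝ} (hε : |ε| = 1) (a b : ℝ) :
    ∫ y, (exp (-2 * (y - a) ^ 2) + ε * exp (-2 * (y - -a) ^ 2)) *
        (exp (-2 * (y - b) ^ 2) + ε * exp (-2 * (y - -b) ^ 2))
      = √π * (exp (-(a - b) ^ 2) + ε * exp (-(a + b) ^ 2)) := by
  have hI := integrable_gaussian_mul_gaussian
  simp_rw [gaussian_pair_mul_eq hε]
  rw [integral_add ?_ (hI (-a) (-b)), integral_add ?_ ((hI (-a) b).const_mul ε),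
    integral_add (hI a b) ((hI a (-b)).const_mul ε), integral_const_mul, integral_const_mul]
  · simp only [integral_gaussian_mul_gaussian]
    ring_nf
  · exact (hI a b).add ((hI a (-b)).const_mul ε)
  · exact ((hI a b).add ((hI a (-b)).const_mul ε)).add ((hI (-a) b).const_mul ε)

end GaussianConvolution

section SectorKernel

/-- For `γ = -cos θ`, `s = sin θ`, this is the kernel of `T̂_θ⁺` when `ε = 1` and of `-T̂_θ⁻`
when `ε = -1`. -/
def sectorKernel (γ s ε p q : ℝ) : ℝ :=
  s / (2 * π) * ((p ^ 2 + q ^ 2 - 2 * γ * p * q + 2 * s ^ 2)⁻¹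
    + ε * (p ^ 2 + q ^ 2 + 2 * γ * p * q + 2 * s ^ 2)⁻¹)

def sectorFeature (γ s ε : ℝ) (ω : ℝ × ℝ) (p : ℝ) : ℝ :=
  √(s / (2 * π * √π)) * exp (-((1 - γ) * p ^ 2 + s ^ 2) * ω.1) *
    (exp (-2 * (ω.2 - √(γ * ω.1) * p) ^ 2) + ε * exp (-2 * (ω.2 - -(√(γ * ω.1) * p)) ^ 2))

local notation "ν" => Measure.prod (Measure.restrict volume (Ioi (0 : ℝ))) (volume : Measure ℝ)

variable {γ s ε : ℝ}

theorem measurable_sectorFeature : Measurable (uncurry (sectorFeature γ s ε)) := by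
  unfold sectorFeature; fun_prop

theorem abs_sectorFeature_le (hε : |ε| = 1) (ω : ℝ × ℝ) (p : ℝ) :
    |sectorFeature γ s ε ω p| ≤ sectorFeature γ s 1 ω p := by
  unfold sectorFeature
  rw [abs_mul, abs_mul, abs_of_nonneg (sqrt_nonneg _), abs_of_pos (exp_pos _), one_mul]
  gcongr
  refine (abs_add_le _ _).trans_eq ?_
  rw [abs_mul, hε, one_mul, abs_of_pos (exp_pos _), abs_of_pos (exp_pos _)]

theorem sectorFeature_nonneg (ω : ℝ × ℝ) (p : ℝ) : 0 ≤ sectorFeature γ s 1 ω p := by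
  unfold sectorFeature; positivity

section Fibre

variable {t : ℝ} (p q : ℝ)

theorem sectorFeature_mul_sectorFeature (y : ℝ) :
    sectorFeature γ s ε (t, y) p * sectorFeature γ s ε (t, y) q
      = √(s / (2 * π * √π)) * √(s / (2 * π * √π)) *
          (exp (-((1 - γ) * p ^ 2 + s ^ 2) * t) * exp (-((1 - γ) * q ^ 2 + s ^ 2) * t)) *
        ((exp (-2 * (y - √(γ * t) * p) ^ 2) + ε * exp (-2 * (y - -(√(γ * t) * p)) ^ 2)) *
          (exp (-2 * (y - √(γ * t) * q) ^ 2) + ε * exp (-2 * (y - -(√(γ * t) * q)) ^ 2))) := by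
  unfold sectorFeature; ring

theorem integrable_sectorFeature_mul_fibre (hε : |ε| = 1) :
    Integrable fun y => sectorFeature γ s ε (t, y) p * sectorFeature γ s ε (t, y) q := by
  simp_rw [sectorFeature_mul_sectorFeature]
  exact (integrable_gaussian_pair_mul hε _ _).const_mul _

theorem integral_sectorFeature_mul_fibre (hγ : 0 ≤ γ) (hs : 0 ≤ s) (hε : |ε| = 1) (ht : 0 ≤ t) :
    ∫ y, sectorFeature γ s ε (t, y) p * sectorFeature γ s ε (t, y) q
      = s / (2 * π) * (exp (-(p ^ 2 + q ^ 2 - 2 * γ * p * q + 2 * s ^ 2) * t)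
        + ε * exp (-(p ^ 2 + q ^ 2 + 2 * γ * p * q + 2 * s ^ 2) * t)) := by
  have hc : √(s / (2 * π * √π)) * √(s / (2 * π * √π)) * √π = s / (2 * π) := by
    rw [mul_self_sqrt (by positivity)]
    field_simp
  have ha : √(γ * t) ^ 2 = γ * t := sq_sqrt (mul_nonneg hγ ht)
  have h₁ : exp (-((1 - γ) * p ^ 2 + s ^ 2) * t) * exp (-((1 - γ) * q ^ 2 + s ^ 2) * t)
      * exp (-(√(γ * t) * p - √(γ * t) * q) ^ 2)
      = exp (-(p ^ 2 + q ^ 2 - 2 * γ * p * q + 2 * s ^ 2) * t) := by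
    rw [← exp_add, ← exp_add]
    congr 1
    linear_combination (-(p - q) ^ 2) * ha
  have h₂ : exp (-((1 - γ) * p ^ 2 + s ^ 2) * t) * exp (-((1 - γ) * q ^ 2 + s ^ 2) * t)
      * exp (-(√(γ * t) * p + √(γ * t) * q) ^ 2)
      = exp (-(p ^ 2 + q ^ 2 + 2 * γ * p * q + 2 * s ^ 2) * t) := by
    rw [← exp_add, ← exp_add]
    congr 1
    linear_combination (-(p + q) ^ 2) * ha
  simp_rw [sectorFeature_mul_sectorFeature]
  rw [integral_const_mul, integral_gaussian_pair_mul hε, ← hc, ← h₁, ← h₂]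
  ring

end Fibre

theorem sectorDenom_ge (hγ : 0 ≤ γ) (p q : ℝ) :
    (1 - γ) * p ^ 2 + s ^ 2 + ((1 - γ) * q ^ 2 + s ^ 2)
        ≤ p ^ 2 + q ^ 2 - 2 * γ * p * q + 2 * s ^ 2 ∧
      (1 - γ) * p ^ 2 + s ^ 2 + ((1 - γ) * q ^ 2 + s ^ 2)
        ≤ p ^ 2 + q ^ 2 + 2 * γ * p * q + 2 * s ^ 2 :=
  ⟨by nlinarith [mul_nonneg hγ (sq_nonneg (p - q))],
    by nlinarith [mul_nonneg hγ (sq_nonneg (p + q))]⟩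

theorem sectorDenom_pos (hγ : 0 ≤ γ) (hγ1 : γ < 1) (hs : 0 < s) (p q : ℝ) :
    0 < p ^ 2 + q ^ 2 - 2 * γ * p * q + 2 * s ^ 2 ∧
      0 < p ^ 2 + q ^ 2 + 2 * γ * p * q + 2 * s ^ 2 := by
  obtain ⟨h₁, h₂⟩ := sectorDenom_ge (s := s) hγ p q
  have hA : 0 < (1 - γ) * p ^ 2 + s ^ 2 + ((1 - γ) * q ^ 2 + s ^ 2) := by
    nlinarith [sq_nonneg p, sq_nonneg q, pow_pos hs 2]
  exact ⟨hA.trans_le h₁, hA.trans_le h₂⟩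

theorem abs_sectorFeature_mul_le (hε : |ε| = 1) (ω : ℝ × ℝ) (p q : ℝ) :
    |sectorFeature γ s ε ω p * sectorFeature γ s ε ω q|
      ≤ sectorFeature γ s 1 ω p * sectorFeature γ s 1 ω q := by
  rw [abs_mul]
  exact mul_le_mul (abs_sectorFeature_le hε ω p) (abs_sectorFeature_le hε ω q) (abs_nonneg _)
    (sectorFeature_nonneg ω p)

theorem integrable_sectorFeature_one_mul (hγ : 0 ≤ γ) (hγ1 : γ < 1) (hs : 0 < s) (p q : ℝ) :
    Integrable (fun ω => sectorFeature γ s 1 ω p * sectorFeature γ s 1 ω q) ν := by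
  have hmeas :
      AEStronglyMeasurable (fun ω => sectorFeature γ s 1 ω p * sectorFeature γ s 1 ω q) ν := by
    unfold sectorFeature; fun_prop
  refine (integrable_prod_iff hmeas).2
    ⟨ae_of_all _ fun t => integrable_sectorFeature_mul_fibre p q (by simp), ?_⟩
  obtain ⟨h₁, h₂⟩ := sectorDenom_pos hγ hγ1 hs p q
  refine (((integrableOn_exp_mul_Ioi (neg_lt_zero.2 h₁) 0).add
    (integrableOn_exp_mul_Ioi (neg_lt_zero.2 h₂) 0)).const_mul (s / (2 * π))).congr ?_
  filter_upwards [ae_restrict_mem measurableSet_Ioi] with t ht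
  simp_rw [Real.norm_of_nonneg (mul_nonneg (sectorFeature_nonneg _ _) (sectorFeature_nonneg _ _))]
  rw [integral_sectorFeature_mul_fibre p q hγ hs.le (by simp) (le_of_lt ht), one_mul]
  rfl

theorem integrable_sectorFeature_mul (hγ : 0 ≤ γ) (hγ1 : γ < 1) (hs : 0 < s) (p q : ℝ)
    (hε : |ε| = 1) :
    Integrable (fun ω => sectorFeature γ s ε ω p * sectorFeature γ s ε ω q) ν := by
  refine (integrable_sectorFeature_one_mul hγ hγ1 hs p q).mono ?_ (ae_of_all _ fun ω => ?_)
  · unfold sectorFeature; fun_prop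
  · rw [Real.norm_eq_abs, Real.norm_eq_abs]
    exact (abs_sectorFeature_mul_le hε ω p q).trans (le_abs_self _)

theorem integral_sectorFeature_mul (hγ : 0 ≤ γ) (hγ1 : γ < 1) (hs : 0 < s) (p q : ℝ)
    (hε : |ε| = 1) :
    ∫ ω, sectorFeature γ s ε ω p * sectorFeature γ s ε ω q ∂ν = sectorKernel γ s ε p q := by
  obtain ⟨h₁, h₂⟩ := sectorDenom_pos hγ hγ1 hs p q
  rw [integral_prod _ (integrable_sectorFeature_mul hγ hγ1 hs p q hε),
    setIntegral_congr_fun measurableSet_Ioi fun t ht =>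
      integral_sectorFeature_mul_fibre p q hγ hs.le hε (le_of_lt ht),
    integral_const_mul, integral_add (integrableOn_exp_mul_Ioi (neg_lt_zero.2 h₁) 0)
      ((integrableOn_exp_mul_Ioi (neg_lt_zero.2 h₂) 0).const_mul ε), integral_const_mul,
    integral_exp_mul_Ioi (neg_lt_zero.2 h₁), integral_exp_mul_Ioi (neg_lt_zero.2 h₂)]
  simp only [mul_zero, exp_zero, neg_div_neg_eq, one_div, sectorKernel]

theorem memLp_two_div_sqrt_mul_sq_add_sq {a s : ℝ} (ha : 0 < a) (hs : s ≠ 0) (c : ℝ) :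
    MemLp (fun p : ℝ => c / √(a * p ^ 2 + s ^ 2)) 2 := by
  refine (memLp_two_iff_integrable_sq (Measurable.aestronglyMeasurable (by fun_prop))).2 ?_
  have hk : √a / s ≠ 0 := by positivity
  have hint := ((integrable_comp_mul_left_iff (fun y : ℝ => (1 + y ^ 2)⁻¹) hk).2
    integrable_inv_one_add_sq).const_mul (c ^ 2 / s ^ 2)
  refine hint.congr (ae_of_all _ fun p => ?_)
  have hA : 0 < a * p ^ 2 + s ^ 2 := by positivity
  have h1 : 1 + (√a / s * p) ^ 2 = (a * p ^ 2 + s ^ 2) / s ^ 2 := by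
    rw [mul_pow, div_pow, sq_sqrt ha.le]
    field_simp
    ring
  simp only [h1, div_pow, sq_sqrt hA.le, inv_div]
  field_simp

theorem sectorKernel_one_le (hγ : 0 ≤ γ) (hγ1 : γ < 1) (hs : 0 < s) (p q : ℝ) :
    sectorKernel γ s 1 p q
      ≤ √(s / (2 * π)) / √((1 - γ) * p ^ 2 + s ^ 2)
        * (√(s / (2 * π)) / √((1 - γ) * q ^ 2 + s ^ 2)) := by
  obtain ⟨h₁, h₂⟩ := sectorDenom_ge (s := s) hγ p q
  have hAp : 0 < (1 - γ) * p ^ 2 + s ^ 2 := by nlinarith [sq_nonneg p, pow_pos hs 2]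
  have hAq : 0 < (1 - γ) * q ^ 2 + s ^ 2 := by nlinarith [sq_nonneg q, pow_pos hs 2]
  set a := √((1 - γ) * p ^ 2 + s ^ 2)
  set b := √((1 - γ) * q ^ 2 + s ^ 2)
  have ha : a ^ 2 = (1 - γ) * p ^ 2 + s ^ 2 := sq_sqrt hAp.le
  have hb : b ^ 2 = (1 - γ) * q ^ 2 + s ^ 2 := sq_sqrt hAq.le
  have hab : 0 < 2 * (a * b) := by positivity
  have hamgm : 2 * (a * b) ≤ a ^ 2 + b ^ 2 := by nlinarith [sq_nonneg (a - b)]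
  calc sectorKernel γ s 1 p q ≤ s / (2 * π) * ((2 * (a * b))⁻¹ + 1 * (2 * (a * b))⁻¹) := by
        unfold sectorKernel
        gcongr <;> linarith
    _ = _ := by
        rw [div_mul_div_comm, mul_self_sqrt (by positivity)]
        field_simp
        ring

theorem sectorKernel_form_nonneg (hγ : 0 ≤ γ) (hγ1 : γ < 1) (hs : 0 < s) (hε : |ε| = 1)
    {φ : ℝ → ℝ} (hφ : MemLp φ 2) :
    0 ≤ ∫ p, (∫ q, sectorKernel γ s ε p q * φ q) * φ p := by
  have hbound (p q : ℝ) : ∫ ω, |sectorFeature γ s ε ω p * sectorFeature γ s ε ω q| ∂ν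
      ≤ √(s / (2 * π)) / √((1 - γ) * p ^ 2 + s ^ 2)
        * (√(s / (2 * π)) / √((1 - γ) * q ^ 2 + s ^ 2)) :=
    calc _ ≤ ∫ ω, sectorFeature γ s 1 ω p * sectorFeature γ s 1 ω q ∂ν :=
          integral_mono (integrable_sectorFeature_mul hγ hγ1 hs p q hε).abs
            (integrable_sectorFeature_one_mul hγ hγ1 hs p q) (abs_sectorFeature_mul_le hε · p q)
      _ = sectorKernel γ s 1 p q := integral_sectorFeature_mul hγ hγ1 hs p q (by simp)
      _ ≤ _ := sectorKernel_one_le hγ hγ1 hs p q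
  simp_rw [← integral_sectorFeature_mul hγ hγ1 hs _ _ hε]
  exact integral_gram_form_nonneg <| integrable_gram_of_le measurable_sectorFeature
    hφ.aestronglyMeasurable (fun p q => integrable_sectorFeature_mul hγ hγ1 hs p q hε) hbound
    ((memLp_two_div_sqrt_mul_sq_add_sq (sub_pos.2 hγ1) hs.ne' _).integrable_mul hφ)

end SectorKernel

section L2Forms

variable {α : Type*} [MeasurableSpace α] {μ : Measure α}

theorem L2.real_inner_eq_integral_mul (ψ φ : Lp ℝ 2 μ) : ⟪ψ, φ⟫ = ∫ a, ψ a * φ a ∂μ := by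
  rw [L2.inner_def]
  simp only [RCLike.inner_apply, conj_trivial, mul_comm]

theorem L2.real_inner_eq_integral_kernel {k : α → α → ℝ} {ψ φ : Lp ℝ 2 μ}
    (h : ∀ᵐ p ∂μ, ψ p = ∫ q, k p q * φ q ∂μ) :
    ⟪ψ, φ⟫ = ∫ p, (∫ q, k p q * φ q ∂μ) * φ p ∂μ := by
  rw [L2.real_inner_eq_integral_mul]
  exact integral_congr_ae (h.mono fun p hp => congrArg (· * φ p) hp)

theorem L2.real_inner_le_of_ae_eq_mul {m : α → ℝ} {c : ℝ} (hm : ∀ a, m a ≤ c) {ψ φ : Lp ℝ 2 μ}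
    (h : ∀ᵐ a ∂μ, ψ a = m a * φ a) : ⟪ψ, φ⟫ ≤ c * ‖φ‖ ^ 2 := by
  rw [← real_inner_self_eq_norm_sq, ← real_inner_smul_left, L2.real_inner_eq_integral_mul,
    L2.real_inner_eq_integral_mul]
  refine integral_mono_ae ((Lp.memLp ψ).integrable_mul (Lp.memLp φ))
    ((Lp.memLp (c • φ)).integrable_mul (Lp.memLp φ)) ?_
  filter_upwards [h, Lp.coeFn_smul c φ] with a ha hca
  rw [ha, hca, Pi.smul_apply, smul_eq_mul, mul_assoc, mul_assoc]
  exact mul_le_mul_of_nonneg_right (hm a) (mul_self_nonneg _)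

end L2Forms

theorem apply_ne_smul_of_real_inner_le {E : Type*} [NormedAddCommGroup E] [InnerProductSpace ℝ E]
    {A : E → E} {c : ℝ} (hA : ∀ φ, ⟪A φ, φ⟫ ≤ c * ‖φ‖ ^ 2) {k : ℝ} (hk : c < k) {φ : E}
    (hφ : φ ≠ 0) : A φ ≠ k • φ := by
  intro h
  have hle := hA φ
  rw [h, real_inner_smul_left, real_inner_self_eq_norm_sq] at hle
  have : 0 < ‖φ‖ ^ 2 := by positivity
  nlinarith

theorem Tker_eq {θ : ℝ} (hs : sin θ ≠ 0) (p q : ℝ) :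
    Tker θ p q = sin θ / π * (p ^ 2 + q ^ 2 + 2 * -cos θ * p * q + 2 * sin θ ^ 2)⁻¹ := by
  unfold Tker
  rw [div_add_one (by positivity), inv_div]
  field_simp
  ring_nf

theorem TkerPlus_eq_sectorKernel {θ : ℝ} (hs : sin θ ≠ 0) :
    TkerPlus θ = sectorKernel (-cos θ) (sin θ) 1 := by
  ext p q
  rw [TkerPlus, Tker_eq hs, Tker_eq hs, sectorKernel]
  ring_nf

theorem TkerMinus_eq_neg_sectorKernel {θ : ℝ} (hs : sin θ ≠ 0) (p q : ℝ) :
    TkerMinus θ p q = -sectorKernel (-cos θ) (sin θ) (-1) p q := by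
  rw [TkerMinus, Tker_eq hs, Tker_eq hs, sectorKernel]
  ring_nf

/-- For every `θ ∈ [π/2,π)`, the self-adjoint operators `T̂₀ − T̂_θ⁺` and `T̂₀ + T̂_θ⁻` on
`L²(ℝ)` are bounded above by `2^{−1/2}·Id` in the quadratic form sense; in particular neither
operator has an eigenvalue `k > 1/√2`.  (`T̂₀` is multiplication by `(p²+2)^{−1/2}`.) -/
theorem no_boundstate_odd_sectors (θ : ℝ) (hθ : θ ∈ Set.Ico (Real.pi / 2) Real.pi)
    (T0 Tp Tm : Hsp →L[ℝ] Hsp)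
    (hT0 : ∀ φ : Hsp, ∀ᵐ p : ℝ, T0 φ p = (Real.sqrt (p ^ 2 + 2))⁻¹ * φ p)
    (hTp : ∀ φ : Hsp, ∀ᵐ p : ℝ, Tp φ p = ∫ q : ℝ, TkerPlus θ p q * φ q)
    (hTm : ∀ φ : Hsp, ∀ᵐ p : ℝ, Tm φ p = ∫ q : ℝ, TkerMinus θ p q * φ q) :
    (∀ φ : Hsp, ⟪(T0 - Tp) φ, φ⟫ ≤ (Real.sqrt 2)⁻¹ * ‖φ‖ ^ 2) ∧
    (∀ φ : Hsp, ⟪(T0 + Tm) φ, φ⟫ ≤ (Real.sqrt 2)⁻¹ * ‖φ‖ ^ 2) ∧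
    (∀ k : ℝ, (Real.sqrt 2)⁻¹ < k → ∀ φ : Hsp, φ ≠ 0 → (T0 - Tp) φ ≠ k • φ) ∧
    (∀ k : ℝ, (Real.sqrt 2)⁻¹ < k → ∀ φ : Hsp, φ ≠ 0 → (T0 + Tm) φ ≠ k • φ) := by
  have hs : 0 < sin θ := sin_pos_of_pos_of_lt_pi (by linarith [hθ.1, pi_pos]) hθ.2
  have hγ : 0 ≤ -cos θ :=
    neg_nonneg.2 (cos_nonpos_of_pi_div_two_le_of_le hθ.1 (by linarith [hθ.2, pi_pos]))
  have hγ1 : -cos θ < 1 := by nlinarith [sin_sq_add_cos_sq θ]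
  have hT0le (φ : Hsp) : ⟪T0 φ, φ⟫ ≤ (√2)⁻¹ * ‖φ‖ ^ 2 :=
    L2.real_inner_le_of_ae_eq_mul
      (fun p => inv_anti₀ (by positivity) (sqrt_le_sqrt (by nlinarith [sq_nonneg p]))) (hT0 φ)
  have hTp_nonneg (φ : Hsp) : 0 ≤ ⟪Tp φ, φ⟫ := by
    rw [L2.real_inner_eq_integral_kernel (hTp φ), TkerPlus_eq_sectorKernel hs.ne']
    exact sectorKernel_form_nonneg hγ hγ1 hs (by simp) (Lp.memLp φ)
  have hTm_nonpos (φ : Hsp) : ⟪Tm φ, φ⟫ ≤ 0 := by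
    simp only [L2.real_inner_eq_integral_kernel (hTm φ), TkerMinus_eq_neg_sectorKernel hs.ne',
      neg_mul, integral_neg, neg_nonpos]
    exact sectorKernel_form_nonneg hγ hγ1 hs (by simp) (Lp.memLp φ)
  have H₁ (φ : Hsp) : ⟪(T0 - Tp) φ, φ⟫ ≤ (√2)⁻¹ * ‖φ‖ ^ 2 := by
    rw [sub_apply, inner_sub_left]
    linarith [hT0le φ, hTp_nonneg φ]
  have H₂ (φ : Hsp) : ⟪(T0 + Tm) φ, φ⟫ ≤ (√2)⁻¹ * ‖φ‖ ^ 2 := by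
    rw [add_apply, inner_add_left]
    linarith [hT0le φ, hTm_nonpos φ]
  exact ⟨H₁, H₂, fun k hk φ hφ => apply_ne_smul_of_real_inner_le H₁ hk hφ,
    fun k hk φ hφ => apply_ne_smul_of_real_inner_le H₂ hk hφ⟩
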